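/- Let X, Y, U be random variables on finite alphabets, with X and Y real-valued where Pearson correlation is used. Then 0 ≤ |ρ(X;Y|U)| ≤ θ(X;Y|U) ≤ ρ_m(X;Y|U) ≤ 1. Moreover: (i) ρ_m(X;Y|U) = 0 if and only if X and Y are conditionally independent given U; (ii) ρ_m(X;Y|U) = 1 if and only if there exist functions f, g with f(X,U) = g(Y,U) almost surely and H(f(X,U)|U) > 0 (i.e., X and Y have nonzero Gács–Körner common information given U). -/

import Mathlib

open scoped BigOperators Classical

noncomputable section

namespace GCI

/-- A bundled finite alphabet. -/
structure FinAlph : Type 1 where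
  carrier : Type
  [fin : Fintype carrier]

instance : CoeSort FinAlph Type := ⟨FinAlph.carrier⟩
instance (A : FinAlph) : Fintype A := A.fin

variable {Ω : Type} [Fintype Ω]

/-- `p` is a probability mass function on the finite sample space `Ω`. -/
def IsPMF (p : Ω → ℝ) : Prop := (∀ ω, 0 ≤ p ω) ∧ ∑ ω, p ω = 1

/-- Expectation of a real random variable `f` under the pmf `p`. -/
def expec (p : Ω → ℝ) (f : Ω → ℝ) : ℝ := ∑ ω, p ω * f ω

/-- Marginal pmf of the random variable `X` under `p`. -/
def marg {𝒳 : Type} (p : Ω → ℝ) (X : Ω → 𝒳) (x : 𝒳) : ℝ :=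
  ∑ ω, if X ω = x then p ω else 0

/-- Conditional expectation `E[f | U = u]`. -/
def cexp {𝒰 : Type} (p : Ω → ℝ) (U : Ω → 𝒰) (u : 𝒰) (f : Ω → ℝ) : ℝ :=
  (∑ ω, if U ω = u then p ω * f ω else 0) / marg p U u

/-- `E[cov(f, g | U)]`. -/
def ccov {𝒰 : Type} (p : Ω → ℝ) (U : Ω → 𝒰) (f g : Ω → ℝ) : ℝ :=
  expec p fun ω => (f ω - cexp p U (U ω) f) * (g ω - cexp p U (U ω) g)

/-- `E[var(f | U)]`. -/
def cvar {𝒰 : Type} (p : Ω → ℝ) (U : Ω → 𝒰) (f : Ω → ℝ) : ℝ := ccov p U f f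

/-- Conditional Pearson correlation `ρ(f; g | U)`. -/
def ccorr {𝒰 : Type} (p : Ω → ℝ) (U : Ω → 𝒰) (f g : Ω → ℝ) : ℝ :=
  if 0 < cvar p U f * cvar p U g then
    ccov p U f g / (Real.sqrt (cvar p U f) * Real.sqrt (cvar p U g))
  else 0

/-- Conditional correlation ratio `θ(X; Y | U)` for a real-valued `X`. -/
def cratio {𝒴 𝒰 : Type} (p : Ω → ℝ) (U : Ω → 𝒰) (X : Ω → ℝ) (Y : Ω → 𝒴) : ℝ :=
  ⨆ g : 𝒴 × 𝒰 → ℝ, ccorr p U X fun ω => g (Y ω, U ω)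

/-- Conditional maximal correlation `ρ_m(X; Y | U)`. -/
def maxCorr {𝒳 𝒴 𝒰 : Type} (p : Ω → ℝ) (U : Ω → 𝒰) (X : Ω → 𝒳) (Y : Ω → 𝒴) : ℝ :=
  ⨆ f : 𝒳 × 𝒰 → ℝ, ⨆ g : 𝒴 × 𝒰 → ℝ,
    ccorr p U (fun ω => f (X ω, U ω)) fun ω => g (Y ω, U ω)

/-- Unconditional Pearson correlation. -/
def corr0 (p : Ω → ℝ) (f g : Ω → ℝ) : ℝ := ccorr p (fun _ => ()) f g

/-- Unconditional correlation ratio `θ(X;Y)`. -/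
def ratio0 {𝒴 : Type} (p : Ω → ℝ) (X : Ω → ℝ) (Y : Ω → 𝒴) : ℝ :=
  cratio p (fun _ => ()) X Y

/-- Unconditional maximal correlation `ρ_m(X;Y)`. -/
def maxCorr0 {𝒳 𝒴 : Type} (p : Ω → ℝ) (X : Ω → 𝒳) (Y : Ω → 𝒴) : ℝ :=
  maxCorr p (fun _ => ()) X Y

/-- Shannon entropy (base 2) of the random variable `X` under `p`. -/
def ent {𝒳 : Type} [Fintype 𝒳] (p : Ω → ℝ) (X : Ω → 𝒳) : ℝ :=
  ∑ x, -(marg p X x * Real.logb 2 (marg p X x))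

/-- Conditional Shannon entropy `H(X | U)`. -/
def condEnt {𝒳 𝒰 : Type} [Fintype 𝒳] [Fintype 𝒰] (p : Ω → ℝ) (X : Ω → 𝒳) (U : Ω → 𝒰) : ℝ :=
  ent p (fun ω => (X ω, U ω)) - ent p U

/-- Mutual information `I(X; U)`. -/
def mutInfo {𝒳 𝒰 : Type} [Fintype 𝒳] [Fintype 𝒰] (p : Ω → ℝ) (X : Ω → 𝒳) (U : Ω → 𝒰) : ℝ :=
  ent p X + ent p U - ent p fun ω => (X ω, U ω)

/-- Almost-sure equality of two discrete random variables. -/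
def AEEq {𝒱 : Type} (p : Ω → ℝ) (f g : Ω → 𝒱) : Prop := ∀ ω, 0 < p ω → f ω = g ω

/-- The Gács–Körner common information `C_GK(X;Y)`. -/
def CGK {𝒳 𝒴 : Type} (p : Ω → ℝ) (X : Ω → 𝒳) (Y : Ω → 𝒴) : ℝ :=
  sSup { r | ∃ (𝒱 : FinAlph) (f : 𝒳 → 𝒱) (g : 𝒴 → 𝒱),
    AEEq p (fun ω => f (X ω)) (fun ω => g (Y ω)) ∧ r = ent p fun ω => f (X ω) }

/-- The conditional Gács–Körner common information `C_GK(X;Y|U)`. -/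
def CGKcond {𝒳 𝒴 𝒰 : Type} [Fintype 𝒰] (p : Ω → ℝ) (X : Ω → 𝒳) (Y : Ω → 𝒴)
    (U : Ω → 𝒰) : ℝ :=
  sSup { r | ∃ (𝒱 : FinAlph) (f : 𝒳 × 𝒰 → 𝒱) (g : 𝒴 × 𝒰 → 𝒱),
    AEEq p (fun ω => f (X ω, U ω)) (fun ω => g (Y ω, U ω)) ∧
    r = condEnt p (fun ω => f (X ω, U ω)) U }

/-- The `β`-approximate common information (approximate information-correlation function). -/
def Cbeta {𝒳 𝒴 : Type} [Fintype 𝒳] [Fintype 𝒴] (p : 𝒳 × 𝒴 → ℝ) (β : ℝ) : ℝ :=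
  sInf { r | ∃ (𝒰 : FinAlph) (q : (𝒳 × 𝒴) × 𝒰 → ℝ),
    IsPMF q ∧ (∀ a, marg q Prod.fst a = p a) ∧
    maxCorr q Prod.snd (fun a => a.1.1) (fun a => a.1.2) ≤ β ∧
    r = mutInfo q Prod.fst Prod.snd }

/-- The `n`-th term in the definition of the `β`-exact common information:
the normalized smallest entropy of an auxiliary variable for `n` i.i.d. copies. -/
def KbetaN {𝒳 𝒴 : Type} [Fintype 𝒳] [Fintype 𝒴] (p : 𝒳 × 𝒴 → ℝ) (β : ℝ) (n : ℕ) : ℝ :=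
  sInf { r | ∃ (𝒰 : FinAlph) (q : ((Fin n → 𝒳) × (Fin n → 𝒴)) × 𝒰 → ℝ),
    IsPMF q ∧
    (∀ a : (Fin n → 𝒳) × (Fin n → 𝒴), marg q Prod.fst a = ∏ i, p (a.1 i, a.2 i)) ∧
    maxCorr q Prod.snd (fun a => a.1.1) (fun a => a.1.2) ≤ β ∧
    r = (1 / (n : ℝ)) * ent q Prod.snd }

/-- The `β`-exact common information (exact information-correlation function). -/
def Kbeta {𝒳 𝒴 : Type} [Fintype 𝒳] [Fintype 𝒴] (p : 𝒳 × 𝒴 → ℝ) (β : ℝ) : ℝ :=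
  Filter.limUnder Filter.atTop fun n => KbetaN p β n

/-!
The linear map `f ↦ √p · (f - E[f|U])` into Euclidean space turns `ccov` into the inner product
and `ccorr` into the cosine of the angle between the images (`ccorr_eq_inner_div`); the chain of
inequalities is then Cauchy–Schwarz.

`ρ_m(X;Y|U) = 0` says that every `f(X,U)` is conditionally uncorrelated with every `g(Y,U)`;
by bilinearity this follows from conditional independence, and for indicator functions it is
exactly the factorisation of the conditional pmf.

The images of the functions of `(X,U)` and of `(Y,U)` are finite-dimensional subspaces. If they
meet only in `0`, compactness of the unit sphere bounds the angle between them away from `0`, so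
`ρ_m < 1`. Otherwise a common nonzero vector gives `f(X,U) - E[f|U] = g(Y,U) - E[g|U]` a.s., and
this common part is not a.s. a function of `U`, i.e. has positive conditional entropy.
Conversely, a common part with positive conditional entropy, coded into `ℝ`, has conditional
correlation `1` with itself.
-/

open scoped RealInnerProductSpace

section Marginals

variable {α 𝒰 : Type} {p : Ω → ℝ}

lemma marg_nonneg (hp : ∀ ω, 0 ≤ p ω) (Z : Ω → α) (z : α) : 0 ≤ marg p Z z :=
  Finset.sum_nonneg fun ω _ => by split <;> simp [hp ω]

lemma le_marg (hp : ∀ ω, 0 ≤ p ω) (Z : Ω → α) (ω : Ω) : p ω ≤ marg p Z (Z ω) := by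
  calc p ω = if Z ω = Z ω then p ω else 0 := by simp
    _ ≤ marg p Z (Z ω) := Finset.single_le_sum (f := fun ω' => if Z ω' = Z ω then p ω' else 0)
      (fun ω' _ => by split <;> simp [hp ω']) (Finset.mem_univ ω)

lemma eq_zero_of_marg_eq_zero (hp : ∀ ω, 0 ≤ p ω) {Z : Ω → α} {z : α} (h : marg p Z z = 0)
    {ω : Ω} (hω : Z ω = z) : p ω = 0 := by
  have hle := le_marg hp Z ω
  rw [hω, h] at hle
  exact le_antisymm hle (hp ω)

lemma marg_congr {β : Type} {Z : Ω → α} {W : Ω → β} {z : α} {w : β}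
    (h : ∀ ω, Z ω = z ↔ W ω = w) : marg p Z z = marg p W w :=
  Finset.sum_congr rfl fun ω _ => by simp only [h ω]

lemma marg_sub_marg_pair (V : Ω → α) (U : Ω → 𝒰) (v : α) (u : 𝒰) :
    marg p U u - marg p (fun ω => (V ω, U ω)) (v, u) =
      ∑ ω, if U ω = u ∧ V ω ≠ v then p ω else 0 := by
  simp only [marg, ← Finset.sum_sub_distrib]
  refine Finset.sum_congr rfl fun ω _ => ?_
  by_cases hu : U ω = u <;> by_cases hv : V ω = v <;> simp [hu, hv]

lemma marg_eq_sum_marg_pair [Fintype α] (V : Ω → α) (U : Ω → 𝒰) (u : 𝒰) :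
    marg p U u = ∑ v, marg p (fun ω => (V ω, U ω)) (v, u) := by
  simp only [marg]
  rw [Finset.sum_comm]
  refine Finset.sum_congr rfl fun ω _ => ?_
  rw [Finset.sum_eq_single (V ω) (fun v _ hv => by simp [Ne.symm hv]) (by simp)]
  simp

lemma marg_pair_le (hp : ∀ ω, 0 ≤ p ω) (V : Ω → α) (U : Ω → 𝒰) (v : α) (u : 𝒰) :
    marg p (fun ω => (V ω, U ω)) (v, u) ≤ marg p U u := by
  rw [← sub_nonneg, marg_sub_marg_pair]
  exact Finset.sum_nonneg fun ω _ => by split <;> simp [hp ω]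

end Marginals

section FiberSum

variable {α 𝒰 : Type} {p : Ω → ℝ} {U : Ω → 𝒰}

def fiberSum (p : Ω → ℝ) (U : Ω → 𝒰) (u : 𝒰) (f : Ω → ℝ) : ℝ :=
  ∑ ω, if U ω = u then p ω * f ω else 0

lemma cexp_eq_fiberSum_div (u : 𝒰) (f : Ω → ℝ) :
    cexp p U u f = fiberSum p U u f / marg p U u := rfl

lemma fiberSum_eq_zero_of_marg_eq_zero (hp : ∀ ω, 0 ≤ p ω) {u : 𝒰} (h : marg p U u = 0)
    (f : Ω → ℝ) : fiberSum p U u f = 0 :=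
  Finset.sum_eq_zero fun ω _ => by
    split_ifs with hu
    · rw [eq_zero_of_marg_eq_zero hp h hu, zero_mul]
    · rfl

lemma fiberSum_comp (Z : Ω → α) (T : Finset α) (hT : ∀ ω, Z ω ∈ T) (u : 𝒰) (h : α × 𝒰 → ℝ) :
    fiberSum p U u (fun ω => h (Z ω, U ω)) =
      ∑ z ∈ T, marg p (fun ω => (Z ω, U ω)) (z, u) * h (z, u) := by
  simp only [marg, Finset.sum_mul, fiberSum]
  rw [Finset.sum_comm]
  refine Finset.sum_congr rfl fun ω _ => ?_
  rw [Finset.sum_eq_single_of_mem (Z ω) (hT ω) fun z _ hz => by simp [Ne.symm hz]]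
  by_cases hu : U ω = u <;> simp [hu]

lemma fiberSum_indicator (Z : Ω → α) (z : α) [DecidablePred fun ω => Z ω = z] {u : 𝒰}
    (hZ : ∀ ω, Z ω = z → U ω = u) (u' : 𝒰) :
    fiberSum p U u' (fun ω => if Z ω = z then 1 else 0) =
      if u' = u then marg p Z z else 0 := by
  split_ifs with hu'
  · subst hu'
    refine Finset.sum_congr rfl fun ω _ => ?_
    by_cases h : Z ω = z <;> simp [h, hZ ω]
  · refine Finset.sum_eq_zero fun ω _ => ?_
    by_cases h : Z ω = z
    · rw [if_neg fun (hu : U ω = u') => hu' (hu ▸ hZ ω h)]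
    · simp [h]

variable (p U) in
lemma ccov_eq_sum_fiberSum [Fintype 𝒰] (f g : Ω → ℝ) :
    ccov p U f g = ∑ u, (fiberSum p U u (fun ω => f ω * g ω) -
      fiberSum p U u f * fiberSum p U u g / marg p U u) := by
  have hfiber : ∀ u, (∑ ω, if U ω = u then
      p ω * ((f ω - cexp p U (U ω) f) * (g ω - cexp p U (U ω) g)) else 0) =
      fiberSum p U u (fun ω => f ω * g ω) - cexp p U u g * fiberSum p U u f -
        cexp p U u f * fiberSum p U u g + cexp p U u f * cexp p U u g * marg p U u := by
    intro u
    simp only [fiberSum, marg, Finset.mul_sum, ← Finset.sum_sub_distrib,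
      ← Finset.sum_add_distrib]
    refine Finset.sum_congr rfl fun ω _ => ?_
    split_ifs with hu
    · rw [hu]; ring
    · ring
  rw [ccov, expec, ← Finset.sum_fiberwise Finset.univ U]
  simp only [Finset.sum_filter]
  refine Finset.sum_congr rfl fun u _ => ?_
  rw [hfiber, cexp_eq_fiberSum_div, cexp_eq_fiberSum_div]
  rcases eq_or_ne (marg p U u) 0 with hm | hm
  · simp [hm]
  · field_simp
    ring

end FiberSum

section CenteredVec

variable {𝒰 : Type} {p : Ω → ℝ} {U : Ω → 𝒰}

lemma cexp_add (u : 𝒰) (f g : Ω → ℝ) : cexp p U u (f + g) = cexp p U u f + cexp p U u g := by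
  simp only [cexp, ← add_div, ← Finset.sum_add_distrib]
  congr 1
  refine Finset.sum_congr rfl fun ω _ => ?_
  split_ifs <;> simp [mul_add]

lemma cexp_smul (u : 𝒰) (c : ℝ) (f : Ω → ℝ) : cexp p U u (c • f) = c * cexp p U u f := by
  simp only [cexp, ← mul_div_assoc, Finset.mul_sum]
  congr 1
  refine Finset.sum_congr rfl fun ω _ => ?_
  split_ifs
  · simp only [Pi.smul_apply, smul_eq_mul]; ring
  · simp

variable (p U) in
def centeredVec : (Ω → ℝ) →ₗ[ℝ] EuclideanSpace ℝ Ω where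
  toFun f := WithLp.toLp 2 fun ω => √(p ω) * (f ω - cexp p U (U ω) f)
  map_add' f g := by
    ext ω
    simp only [cexp_add, Pi.add_apply, PiLp.add_apply]
    ring
  map_smul' c f := by
    ext ω
    simp only [cexp_smul, Pi.smul_apply, PiLp.smul_apply, smul_eq_mul, RingHom.id_apply]
    ring

lemma centeredVec_apply (f : Ω → ℝ) (ω : Ω) :
    centeredVec p U f ω = √(p ω) * (f ω - cexp p U (U ω) f) := rfl

lemma inner_centeredVec (hp : ∀ ω, 0 ≤ p ω) (f g : Ω → ℝ) :
    ⟪centeredVec p U f, centeredVec p U g⟫ = ccov p U f g := by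
  simp only [ccov, expec, PiLp.inner_apply, RCLike.inner_apply, conj_trivial, centeredVec_apply]
  refine Finset.sum_congr rfl fun ω _ => ?_
  linear_combination ((f ω - cexp p U (U ω) f) * (g ω - cexp p U (U ω) g)) *
    Real.mul_self_sqrt (hp ω)

lemma norm_centeredVec (hp : ∀ ω, 0 ≤ p ω) (f : Ω → ℝ) :
    ‖centeredVec p U f‖ = √(cvar p U f) := by
  rw [cvar, ← inner_centeredVec hp, real_inner_self_eq_norm_sq, Real.sqrt_sq (norm_nonneg _)]

lemma cvar_nonneg (hp : ∀ ω, 0 ≤ p ω) (f : Ω → ℝ) : 0 ≤ cvar p U f := by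
  rw [cvar, ← inner_centeredVec hp]
  exact real_inner_self_nonneg

lemma ccorr_eq_inner_div (hp : ∀ ω, 0 ≤ p ω) (f g : Ω → ℝ) :
    ccorr p U f g = ⟪centeredVec p U f, centeredVec p U g⟫ /
      (‖centeredVec p U f‖ * ‖centeredVec p U g‖) := by
  rw [ccorr, inner_centeredVec hp, norm_centeredVec hp, norm_centeredVec hp]
  split_ifs with h
  · rfl
  · have h0 : cvar p U f * cvar p U g = 0 :=
      le_antisymm (not_lt.1 h) (mul_nonneg (cvar_nonneg hp f) (cvar_nonneg hp g))
    rw [← Real.sqrt_mul (cvar_nonneg hp f), h0, Real.sqrt_zero, div_zero]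

lemma abs_ccorr_le_one (hp : ∀ ω, 0 ≤ p ω) (f g : Ω → ℝ) : |ccorr p U f g| ≤ 1 := by
  rw [ccorr_eq_inner_div hp]
  exact abs_real_inner_div_norm_mul_norm_le_one _ _

lemma ccorr_neg_right (hp : ∀ ω, 0 ≤ p ω) (f g : Ω → ℝ) :
    ccorr p U f (-g) = -ccorr p U f g := by
  rw [ccorr_eq_inner_div hp, ccorr_eq_inner_div hp, map_neg, inner_neg_right, norm_neg, neg_div]

lemma ccorr_eq_zero_iff (hp : ∀ ω, 0 ≤ p ω) {f g : Ω → ℝ} :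
    ccorr p U f g = 0 ↔ ccov p U f g = 0 := by
  rw [ccorr_eq_inner_div hp, ← inner_centeredVec hp, div_eq_zero_iff, mul_eq_zero,
    norm_eq_zero, norm_eq_zero]
  constructor
  · rintro (h | h | h) <;> simp [h]
  · exact Or.inl

lemma centeredVec_congr_ae (hp : ∀ ω, 0 ≤ p ω) {f g : Ω → ℝ}
    (h : ∀ ω, 0 < p ω → f ω = g ω) : centeredVec p U f = centeredVec p U g := by
  have hmul : ∀ ω, p ω * f ω = p ω * g ω := fun ω => by
    rcases (hp ω).eq_or_lt with h0 | hpos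
    · simp [← h0]
    · rw [h ω hpos]
  have hcexp : ∀ u, cexp p U u f = cexp p U u g := fun u => by
    simp only [cexp, hmul]
  ext ω
  rw [centeredVec_apply, centeredVec_apply, hcexp]
  rcases (hp ω).eq_or_lt with h0 | hpos
  · simp [← h0]
  · rw [h ω hpos]

end CenteredVec

section Suprema

variable {𝒳 𝒴 𝒰 : Type} {p : Ω → ℝ} {U : Ω → 𝒰}

lemma cratio_le_one (hp : ∀ ω, 0 ≤ p ω) (F : Ω → ℝ) (Y : Ω → 𝒴) : cratio p U F Y ≤ 1 :=
  ciSup_le fun _ => (abs_le.1 (abs_ccorr_le_one hp _ _)).2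

lemma ccorr_le_cratio (hp : ∀ ω, 0 ≤ p ω) (F : Ω → ℝ) (Y : Ω → 𝒴) (g : 𝒴 × 𝒰 → ℝ) :
    ccorr p U F (fun ω => g (Y ω, U ω)) ≤ cratio p U F Y :=
  le_ciSup (f := fun g : 𝒴 × 𝒰 → ℝ => ccorr p U F fun ω => g (Y ω, U ω))
    ⟨1, by rintro _ ⟨g, rfl⟩; exact (abs_le.1 (abs_ccorr_le_one hp _ _)).2⟩ g

lemma cratio_comp_le_maxCorr (hp : ∀ ω, 0 ≤ p ω) (X : Ω → 𝒳) (Y : Ω → 𝒴) (f : 𝒳 × 𝒰 → ℝ) :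
    cratio p U (fun ω => f (X ω, U ω)) Y ≤ maxCorr p U X Y :=
  le_ciSup (f := fun f : 𝒳 × 𝒰 → ℝ => cratio p U (fun ω => f (X ω, U ω)) Y)
    ⟨1, by rintro _ ⟨f, rfl⟩; exact cratio_le_one hp _ Y⟩ f

lemma ccorr_le_maxCorr (hp : ∀ ω, 0 ≤ p ω) (X : Ω → 𝒳) (Y : Ω → 𝒴) (f : 𝒳 × 𝒰 → ℝ)
    (g : 𝒴 × 𝒰 → ℝ) :
    ccorr p U (fun ω => f (X ω, U ω)) (fun ω => g (Y ω, U ω)) ≤ maxCorr p U X Y :=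
  (ccorr_le_cratio hp _ Y g).trans (cratio_comp_le_maxCorr hp X Y f)

lemma maxCorr_le_one (hp : ∀ ω, 0 ≤ p ω) (X : Ω → 𝒳) (Y : Ω → 𝒴) : maxCorr p U X Y ≤ 1 :=
  ciSup_le fun _ => cratio_le_one hp _ Y

lemma maxCorr_le_of_forall_ccorr_le {c : ℝ} (X : Ω → 𝒳) (Y : Ω → 𝒴)
    (h : ∀ (f : 𝒳 × 𝒰 → ℝ) (g : 𝒴 × 𝒰 → ℝ),
      ccorr p U (fun ω => f (X ω, U ω)) (fun ω => g (Y ω, U ω)) ≤ c) :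
    maxCorr p U X Y ≤ c :=
  ciSup_le fun f => ciSup_le fun g => h f g

lemma cratio_le_maxCorr (hp : ∀ ω, 0 ≤ p ω) (X : Ω → ℝ) (Y : Ω → 𝒴) :
    cratio p U X Y ≤ maxCorr p U X Y :=
  cratio_comp_le_maxCorr hp X Y Prod.fst

lemma abs_ccorr_le_cratio (hp : ∀ ω, 0 ≤ p ω) (X Y : Ω → ℝ) :
    |ccorr p U X Y| ≤ cratio p U X Y := by
  refine abs_le'.2 ⟨ccorr_le_cratio hp X Y Prod.fst, ?_⟩
  rw [← ccorr_neg_right hp]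
  exact ccorr_le_cratio hp X Y fun q => -q.1

end Suprema

section CondIndep

variable {𝒳 𝒴 𝒰 : Type} {p : Ω → ℝ}

def CondIndep (p : Ω → ℝ) (X : Ω → 𝒳) (Y : Ω → 𝒴) (U : Ω → 𝒰) : Prop :=
  ∀ x y u, marg p (fun ω => (X ω, Y ω, U ω)) (x, y, u) * marg p U u =
    marg p (fun ω => (X ω, U ω)) (x, u) * marg p (fun ω => (Y ω, U ω)) (y, u)

lemma CondIndep.marg_mul_fiberSum {X : Ω → 𝒳} {Y : Ω → 𝒴} {U : Ω → 𝒰}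
    (h : CondIndep p X Y U) (u : 𝒰) (f : 𝒳 × 𝒰 → ℝ) (g : 𝒴 × 𝒰 → ℝ) :
    marg p U u * fiberSum p U u (fun ω => f (X ω, U ω) * g (Y ω, U ω)) =
      fiberSum p U u (fun ω => f (X ω, U ω)) * fiberSum p U u (fun ω => g (Y ω, U ω)) := by
  set IX := Finset.univ.image X
  set IY := Finset.univ.image Y
  have hX : ∀ ω, X ω ∈ IX := fun ω => Finset.mem_image_of_mem X (Finset.mem_univ ω)
  have hY : ∀ ω, Y ω ∈ IY := fun ω => Finset.mem_image_of_mem Y (Finset.mem_univ ω)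
  have hFG : fiberSum p U u (fun ω => f (X ω, U ω) * g (Y ω, U ω)) =
      ∑ xy ∈ IX ×ˢ IY,
        marg p (fun ω => ((X ω, Y ω), U ω)) (xy, u) * (f (xy.1, u) * g (xy.2, u)) :=
    fiberSum_comp (fun ω => (X ω, Y ω)) _ (fun ω => Finset.mem_product.2 ⟨hX ω, hY ω⟩) u
      fun q => f (q.1.1, q.2) * g (q.1.2, q.2)
  rw [hFG, fiberSum_comp X IX hX u f, fiberSum_comp Y IY hY u g, Finset.sum_product,
    Finset.sum_mul_sum, Finset.mul_sum]
  refine Finset.sum_congr rfl fun x _ => ?_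
  rw [Finset.mul_sum]
  refine Finset.sum_congr rfl fun y _ => ?_
  have hassoc : marg p (fun ω => ((X ω, Y ω), U ω)) ((x, y), u) =
      marg p (fun ω => (X ω, Y ω, U ω)) (x, y, u) :=
    marg_congr fun ω => by simp only [Prod.mk.injEq, and_assoc]
  rw [hassoc]
  linear_combination (f (x, u) * g (y, u)) * h x y u

lemma CondIndep.ccov_eq_zero [Fintype 𝒰] (hp : ∀ ω, 0 ≤ p ω) {X : Ω → 𝒳} {Y : Ω → 𝒴}
    {U : Ω → 𝒰} (h : CondIndep p X Y U) (f : 𝒳 × 𝒰 → ℝ) (g : 𝒴 × 𝒰 → ℝ) :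
    ccov p U (fun ω => f (X ω, U ω)) (fun ω => g (Y ω, U ω)) = 0 := by
  rw [ccov_eq_sum_fiberSum]
  refine Finset.sum_eq_zero fun u _ => ?_
  rw [← h.marg_mul_fiberSum]
  rcases eq_or_ne (marg p U u) 0 with hm | hm
  · simp [fiberSum_eq_zero_of_marg_eq_zero hp hm]
  · field_simp
    ring

lemma condIndep_of_forall_ccov_eq_zero [Fintype 𝒰] (hp : ∀ ω, 0 ≤ p ω) {X : Ω → 𝒳} {Y : Ω → 𝒴}
    {U : Ω → 𝒰} (h : ∀ (f : 𝒳 × 𝒰 → ℝ) (g : 𝒴 × 𝒰 → ℝ),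
      ccov p U (fun ω => f (X ω, U ω)) (fun ω => g (Y ω, U ω)) = 0) :
    CondIndep p X Y U := by
  intro x y u
  have hcov := h (fun q => if q = (x, u) then 1 else 0) (fun q => if q = (y, u) then 1 else 0)
  have hFG : (fun ω => (if (X ω, U ω) = (x, u) then (1 : ℝ) else 0) *
      (if (Y ω, U ω) = (y, u) then 1 else 0)) =
      fun ω => if (X ω, Y ω, U ω) = (x, y, u) then 1 else 0 := by
    ext ω
    by_cases hx : X ω = x <;> by_cases hy : Y ω = y <;> by_cases hu : U ω = u <;>
      simp [hx, hy, hu]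
  rw [ccov_eq_sum_fiberSum, hFG] at hcov
  simp only [fiberSum_indicator (U := U) (fun ω => (X ω, Y ω, U ω)) (x, y, u)
      fun ω hω => (Prod.ext_iff.1 (Prod.ext_iff.1 hω).2).2,
    fiberSum_indicator (U := U) (fun ω => (X ω, U ω)) (x, u) fun ω hω => (Prod.ext_iff.1 hω).2,
    fiberSum_indicator (U := U) (fun ω => (Y ω, U ω)) (y, u) fun ω hω => (Prod.ext_iff.1 hω).2]
    at hcov
  rw [Finset.sum_eq_single u (fun u' _ hu' => by simp [hu']) (by simp)] at hcov
  simp only [if_true] at hcov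
  rcases eq_or_ne (marg p U u) 0 with hm | hm
  · rw [hm, mul_zero, le_antisymm (hm ▸ marg_pair_le hp X U x u) (marg_nonneg hp _ _), zero_mul]
  · field_simp at hcov
    linarith

lemma maxCorr_eq_zero_iff [Fintype 𝒰] (hp : ∀ ω, 0 ≤ p ω) {X : Ω → 𝒳} {Y : Ω → 𝒴}
    {U : Ω → 𝒰} : maxCorr p U X Y = 0 ↔ CondIndep p X Y U := by
  constructor
  · intro h
    refine condIndep_of_forall_ccov_eq_zero hp fun f g => (ccorr_eq_zero_iff hp).1 ?_
    have hle := ccorr_le_maxCorr (U := U) hp X Y f g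
    have hneg := ccorr_le_maxCorr (U := U) hp X Y f fun q => -g q
    rw [h] at hle hneg
    change ccorr p U _ (-fun ω => g (Y ω, U ω)) ≤ 0 at hneg
    rw [ccorr_neg_right hp] at hneg
    linarith
  · intro h
    have hzero : ∀ (f : 𝒳 × 𝒰 → ℝ) (g : 𝒴 × 𝒰 → ℝ),
        ccorr p U (fun ω => f (X ω, U ω)) (fun ω => g (Y ω, U ω)) = 0 :=
      fun f g => (ccorr_eq_zero_iff hp).2 (h.ccov_eq_zero hp f g)
    refine le_antisymm (maxCorr_le_of_forall_ccorr_le X Y fun f g => (hzero f g).le) ?_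
    exact hzero 0 0 ▸ ccorr_le_maxCorr hp X Y 0 0

end CondIndep

section Entropy

variable {α β 𝒰 : Type} {p : Ω → ℝ}

def AEDeterminedBy (p : Ω → ℝ) (V : Ω → α) (U : Ω → 𝒰) : Prop :=
  ∀ ω₁ ω₂, 0 < p ω₁ → 0 < p ω₂ → U ω₁ = U ω₂ → V ω₁ = V ω₂

omit [Fintype Ω] in
lemma AEDeterminedBy.of_comp {V : Ω → α} {U : Ω → 𝒰} {c : α → β}
    (hc : Set.InjOn c (Set.range V)) (h : AEDeterminedBy p (fun ω => c (V ω)) U) :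
    AEDeterminedBy p V U :=
  fun ω₁ ω₂ h₁ h₂ hU => hc ⟨ω₁, rfl⟩ ⟨ω₂, rfl⟩ (h ω₁ ω₂ h₁ h₂ hU)

variable [Fintype α] [Fintype 𝒰]

lemma condEnt_eq_sum (p : Ω → ℝ) (V : Ω → α) (U : Ω → 𝒰) :
    condEnt p V U = ∑ x : α × 𝒰, marg p (fun ω => (V ω, U ω)) x *
      (Real.logb 2 (marg p U x.2) - Real.logb 2 (marg p (fun ω => (V ω, U ω)) x)) := by
  have hU : ∀ u, marg p U u * Real.logb 2 (marg p U u) =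
      ∑ v, marg p (fun ω => (V ω, U ω)) (v, u) * Real.logb 2 (marg p U u) := fun u => by
    rw [← Finset.sum_mul, ← marg_eq_sum_marg_pair]
  rw [condEnt, ent, ent, Fintype.sum_prod_type_right, Fintype.sum_prod_type_right,
    ← Finset.sum_sub_distrib]
  refine Finset.sum_congr rfl fun u _ => ?_
  rw [neg_eq_neg_one_mul, hU u, Finset.mul_sum, ← Finset.sum_sub_distrib]
  refine Finset.sum_congr rfl fun v _ => ?_
  ring

lemma condEnt_pos_iff (hp : ∀ ω, 0 ≤ p ω) (V : Ω → α) (U : Ω → 𝒰) :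
    0 < condEnt p V U ↔ ¬AEDeterminedBy p V U := by
  have hterm : ∀ x : α × 𝒰, 0 ≤ marg p (fun ω => (V ω, U ω)) x *
      (Real.logb 2 (marg p U x.2) - Real.logb 2 (marg p (fun ω => (V ω, U ω)) x)) := by
    rintro ⟨v, u⟩
    rcases (marg_nonneg hp (fun ω => (V ω, U ω)) (v, u)).eq_or_lt with h0 | hpos
    · rw [← h0, zero_mul]
    · exact mul_nonneg hpos.le
        (sub_nonneg.2 (Real.logb_le_logb_of_le one_lt_two hpos (marg_pair_le hp V U v u)))
  rw [condEnt_eq_sum, Finset.sum_pos_iff_of_nonneg fun x _ => hterm x]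
  constructor
  · rintro ⟨⟨v, u⟩, -, hpos⟩ hdet
    obtain ⟨ω₁, -, hω₁⟩ := Finset.exists_ne_zero_of_sum_ne_zero (left_ne_zero_of_mul hpos.ne')
    split_ifs at hω₁ with hvu₁
    · obtain ⟨hv₁, hu₁⟩ := Prod.ext_iff.1 hvu₁
      have hsub : marg p U u - marg p (fun ω => (V ω, U ω)) (v, u) = 0 := by
        rw [marg_sub_marg_pair]
        refine Finset.sum_eq_zero fun ω _ => ?_
        split_ifs with h
        · by_contra hne
          exact h.2 ((hdet ω ω₁ ((hp ω).lt_of_ne' hne) ((hp ω₁).lt_of_ne' hω₁)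
            (h.1.trans hu₁.symm)).trans hv₁)
        · rfl
      rw [sub_eq_zero.1 hsub, sub_self, mul_zero] at hpos
      exact lt_irrefl 0 hpos
    · exact hω₁ rfl
  · intro hndet
    simp only [AEDeterminedBy, not_forall] at hndet
    obtain ⟨ω₁, ω₂, h₁, h₂, hU, hV⟩ := hndet
    refine ⟨(V ω₁, U ω₁), Finset.mem_univ _, mul_pos (h₁.trans_le (le_marg hp _ ω₁)) ?_⟩
    refine sub_pos.2 (Real.logb_lt_logb one_lt_two (h₁.trans_le (le_marg hp _ ω₁)) ?_)
    rw [← sub_pos, marg_sub_marg_pair]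
    refine h₂.trans_le ?_
    calc p ω₂ = if U ω₂ = U ω₁ ∧ V ω₂ ≠ V ω₁ then p ω₂ else 0 := by simp [hU, Ne.symm hV]
      _ ≤ _ := Finset.single_le_sum (f := fun ω => if U ω = U ω₁ ∧ V ω ≠ V ω₁ then p ω else 0)
        (fun ω _ => by split <;> simp [hp ω]) (Finset.mem_univ ω₂)

end Entropy

section Determinism

variable {𝒰 : Type} {p : Ω → ℝ} {U : Ω → 𝒰}

lemma cexp_eq_of_aeDeterminedBy (hp : ∀ ω, 0 ≤ p ω) {F : Ω → ℝ} (h : AEDeterminedBy p F U)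
    {ω : Ω} (hω : 0 < p ω) : cexp p U (U ω) F = F ω := by
  have hsum : fiberSum p U (U ω) F = marg p U (U ω) * F ω := by
    rw [marg, Finset.sum_mul]
    refine Finset.sum_congr rfl fun ω' _ => ?_
    split_ifs with hU
    · rcases (hp ω').eq_or_lt with h0 | hpos
      · simp [← h0]
      · rw [h ω' ω hpos hω hU]
    · simp
  rw [cexp_eq_fiberSum_div, hsum, mul_div_cancel_left₀ _ (hω.trans_le (le_marg hp U ω)).ne']

lemma centeredVec_eq_zero_iff (hp : ∀ ω, 0 ≤ p ω) {F : Ω → ℝ} :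
    centeredVec p U F = 0 ↔ AEDeterminedBy p F U := by
  have hcenter : centeredVec p U F = 0 ↔ ∀ ω, 0 < p ω → F ω = cexp p U (U ω) F := by
    simp only [WithLp.ext_iff, funext_iff, WithLp.ofLp_zero, Pi.zero_apply]
    refine forall_congr' fun ω => ?_
    rw [centeredVec_apply, mul_eq_zero, Real.sqrt_eq_zero (hp ω), sub_eq_zero]
    exact ⟨fun h hω => h.resolve_left hω.ne', fun h => (hp ω).eq_or_lt.imp Eq.symm h⟩
  rw [hcenter]
  refine ⟨fun h ω₁ ω₂ h₁ h₂ hU => by rw [h ω₁ h₁, h ω₂ h₂, hU], fun h ω hω => ?_⟩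
  rw [cexp_eq_of_aeDeterminedBy hp h hω]

end Determinism

theorem Submodule.exists_lt_one_forall_inner_div_le_of_inf_eq_bot {E : Type*}
    [NormedAddCommGroup E] [InnerProductSpace ℝ E] [FiniteDimensional ℝ E] {S T : Submodule ℝ E}
    (h : S ⊓ T = ⊥) : ∃ c < 1, ∀ a ∈ S, ∀ b ∈ T, ⟪a, b⟫ / (‖a‖ * ‖b‖) ≤ c := by
  have hK : IsCompact (Metric.sphere (0 : E) 1 ∩ S) :=
    (isCompact_sphere 0 1).inter_right S.closed_of_finiteDimensional
  have hdisj : Disjoint (Metric.sphere (0 : E) 1 ∩ S) T := by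
    refine Set.disjoint_left.2 fun a ha haT => ?_
    have ha0 : a ∈ S ⊓ T := ⟨ha.2, haT⟩
    rw [h, Submodule.mem_bot] at ha0
    simpa [ha0] using ha.1
  obtain ⟨r, hr, hsep⟩ := Metric.exists_pos_forall_lt_edist hK T.closed_of_finiteDimensional hdisj
  have hr' : (0 : ℝ) < r := hr
  refine ⟨max 0 (1 - (r : ℝ) ^ 2 / 2), max_lt one_pos (by nlinarith), fun a ha b hb => ?_⟩
  rcases eq_or_ne a 0 with rfl | ha0
  · simp
  rcases eq_or_ne b 0 with rfl | hb0
  · simp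
  set a' := (‖a‖⁻¹ : ℝ) • a
  set b' := (‖b‖⁻¹ : ℝ) • b
  have ha' : ‖a'‖ = 1 := norm_smul_inv_norm ha0
  have hb' : ‖b'‖ = 1 := norm_smul_inv_norm hb0
  have hcos : ⟪a, b⟫ / (‖a‖ * ‖b‖) = ⟪a', b'⟫ := by
    rw [real_inner_smul_left, real_inner_smul_right]
    field_simp
  have hdist : (r : ℝ) < ‖a' - b'‖ := by
    have := hsep a' ⟨mem_sphere_zero_iff_norm.2 ha', S.smul_mem _ ha⟩ b' (T.smul_mem _ hb)
    rw [edist_nndist, ENNReal.coe_lt_coe, ← NNReal.coe_lt_coe, coe_nndist, dist_eq_norm] at this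
    exact this
  have hsq : ‖a' - b'‖ ^ 2 = 2 - 2 * ⟪a', b'⟫ := by
    rw [norm_sub_sq_real, ha', hb']
    ring
  rw [hcos]
  refine le_max_of_le_right ?_
  nlinarith [pow_lt_pow_left₀ hdist r.2 two_ne_zero]

lemma exists_finAlph_injOn {α : Type} (s : Finset α) :
    ∃ (𝒱 : FinAlph) (c : α → 𝒱), Set.InjOn c s :=
  ⟨⟨Option s⟩, fun a => if h : a ∈ s then some ⟨a, h⟩ else none,
    fun a ha b hb hab => by simpa [Finset.mem_coe.1 ha, Finset.mem_coe.1 hb] using hab⟩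

section CommonPart

variable {𝒳 𝒴 𝒰 : Type} {p : Ω → ℝ} {U : Ω → 𝒰}

variable (p U) in
def centeredRange (X : Ω → 𝒳) : Submodule ℝ (EuclideanSpace ℝ Ω) :=
  LinearMap.range (centeredVec p U ∘ₗ LinearMap.funLeft ℝ ℝ fun ω => (X ω, U ω))

lemma centeredVec_mem_centeredRange (X : Ω → 𝒳) (f : 𝒳 × 𝒰 → ℝ) :
    centeredVec p U (fun ω => f (X ω, U ω)) ∈ centeredRange p U X :=
  ⟨f, rfl⟩

lemma exists_centeredVec_eq_of_maxCorr_eq_one (hp : ∀ ω, 0 ≤ p ω) {X : Ω → 𝒳} {Y : Ω → 𝒴}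
    (h : maxCorr p U X Y = 1) :
    ∃ (f : 𝒳 × 𝒰 → ℝ) (g : 𝒴 × 𝒰 → ℝ),
      centeredVec p U (fun ω => f (X ω, U ω)) = centeredVec p U (fun ω => g (Y ω, U ω)) ∧
      centeredVec p U (fun ω => f (X ω, U ω)) ≠ 0 := by
  by_contra! hcon
  have hbot : centeredRange p U X ⊓ centeredRange p U Y = ⊥ := by
    rw [eq_bot_iff]
    rintro _ ⟨⟨f, rfl⟩, ⟨g, hg⟩⟩
    exact hcon f g hg.symm
  obtain ⟨c, hc1, hc⟩ := Submodule.exists_lt_one_forall_inner_div_le_of_inf_eq_bot hbot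
  have hle : maxCorr p U X Y ≤ c := maxCorr_le_of_forall_ccorr_le X Y fun f g => by
    rw [ccorr_eq_inner_div hp]
    exact hc _ (centeredVec_mem_centeredRange X f) _ (centeredVec_mem_centeredRange Y g)
  linarith

lemma exists_common_of_centeredVec_eq [Fintype 𝒰] (hp : ∀ ω, 0 ≤ p ω) {X : Ω → 𝒳} {Y : Ω → 𝒴}
    {f : 𝒳 × 𝒰 → ℝ} {g : 𝒴 × 𝒰 → ℝ}
    (heq : centeredVec p U (fun ω => f (X ω, U ω)) = centeredVec p U (fun ω => g (Y ω, U ω)))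
    (hne : centeredVec p U (fun ω => f (X ω, U ω)) ≠ 0) :
    ∃ (𝒱 : FinAlph) (f' : 𝒳 × 𝒰 → 𝒱) (g' : 𝒴 × 𝒰 → 𝒱),
      AEEq p (fun ω => f' (X ω, U ω)) (fun ω => g' (Y ω, U ω)) ∧
      0 < condEnt p (fun ω => f' (X ω, U ω)) U := by
  set f₀ : 𝒳 × 𝒰 → ℝ := fun q => f q - cexp p U q.2 fun ω => f (X ω, U ω)
  set g₀ : 𝒴 × 𝒰 → ℝ := fun q => g q - cexp p U q.2 fun ω => g (Y ω, U ω)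
  have hae : ∀ ω, 0 < p ω → f₀ (X ω, U ω) = g₀ (Y ω, U ω) := fun ω hω => by
    have hω' := congrArg (· ω) heq
    simp only [centeredVec_apply] at hω'
    exact mul_left_cancel₀ (Real.sqrt_ne_zero'.2 hω) hω'
  have hnd : ¬AEDeterminedBy p (fun ω => f₀ (X ω, U ω)) U := fun hdet =>
    hne <| (centeredVec_eq_zero_iff hp).2 fun ω₁ ω₂ h₁ h₂ hU => by
      have := hdet ω₁ ω₂ h₁ h₂ hU
      simp only [f₀] at this
      rw [hU] at this ⊢
      linarith
  obtain ⟨𝒱, c, hc⟩ := exists_finAlph_injOn (Finset.univ.image fun ω => f₀ (X ω, U ω))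
  refine ⟨𝒱, fun q => c (f₀ q), fun q => c (g₀ q), fun ω hω => congrArg c (hae ω hω),
    (condEnt_pos_iff hp _ U).2 fun hdet => hnd (hdet.of_comp (hc.mono ?_))⟩
  rintro _ ⟨ω, rfl⟩
  simp

lemma maxCorr_eq_one_of_common [Fintype 𝒰] (hp : ∀ ω, 0 ≤ p ω) {X : Ω → 𝒳} {Y : Ω → 𝒴} {𝒱 : FinAlph}
    {f : 𝒳 × 𝒰 → 𝒱} {g : 𝒴 × 𝒰 → 𝒱}
    (hae : AEEq p (fun ω => f (X ω, U ω)) (fun ω => g (Y ω, U ω)))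
    (hent : 0 < condEnt p (fun ω => f (X ω, U ω)) U) : maxCorr p U X Y = 1 := by
  set e : 𝒱 → ℝ := fun v => (Fintype.equivFin 𝒱 v : ℕ)
  have he : Function.Injective e :=
    Nat.cast_injective.comp (Fin.val_injective.comp (Fintype.equivFin 𝒱).injective)
  set v := centeredVec p U fun ω => e (f (X ω, U ω))
  have hfg : v = centeredVec p U fun ω => e (g (Y ω, U ω)) :=
    centeredVec_congr_ae hp fun ω hω => congrArg e (hae ω hω)
  have hv : v ≠ 0 := fun h0 =>
    (condEnt_pos_iff hp _ U).1 hent (((centeredVec_eq_zero_iff hp).1 h0).of_comp he.injOn)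
  refine le_antisymm (maxCorr_le_one hp X Y) ?_
  calc (1 : ℝ) = ccorr p U (fun ω => e (f (X ω, U ω))) (fun ω => e (g (Y ω, U ω))) := by
        rw [ccorr_eq_inner_div hp, ← hfg, real_inner_self_eq_norm_mul_norm,
          div_self (mul_self_ne_zero.2 (norm_ne_zero_iff.2 hv))]
    _ ≤ maxCorr p U X Y := ccorr_le_maxCorr hp X Y (fun q => e (f q)) fun q => e (g q)

lemma maxCorr_eq_one_iff [Fintype 𝒰] (hp : ∀ ω, 0 ≤ p ω) {X : Ω → 𝒳} {Y : Ω → 𝒴} :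
    maxCorr p U X Y = 1 ↔ ∃ (𝒱 : FinAlph) (f : 𝒳 × 𝒰 → 𝒱) (g : 𝒴 × 𝒰 → 𝒱),
      AEEq p (fun ω => f (X ω, U ω)) (fun ω => g (Y ω, U ω)) ∧
      0 < condEnt p (fun ω => f (X ω, U ω)) U := by
  refine ⟨fun h => ?_, fun ⟨_, _, _, hae, hent⟩ => maxCorr_eq_one_of_common hp hae hent⟩
  obtain ⟨f, g, heq, hne⟩ := exists_centeredVec_eq_of_maxCorr_eq_one hp h
  exact exists_common_of_centeredVec_eq hp heq hne

end CommonPart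

/-- `0 ≤ |ρ(X;Y|U)| ≤ θ(X;Y|U) ≤ ρ_m(X;Y|U) ≤ 1`; moreover
`ρ_m(X;Y|U) = 0` iff `X` and `Y` are conditionally independent given `U`, and
`ρ_m(X;Y|U) = 1` iff `X` and `Y` have (nonzero) Gács–Körner common information given `U`,
i.e. there are `f, g` with `f(X,U) = g(Y,U)` a.s. and `H(f(X,U)|U) > 0`. -/
theorem corr_le_ratio_le_maxCorr {Ω 𝒰 : Type} [Fintype Ω] [Fintype 𝒰]
    (p : Ω → ℝ) (hp : IsPMF p) (X Y : Ω → ℝ) (U : Ω → 𝒰) :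
    (0 ≤ |ccorr p U X Y| ∧
     |ccorr p U X Y| ≤ cratio p U X Y ∧
     cratio p U X Y ≤ maxCorr p U X Y ∧
     maxCorr p U X Y ≤ 1) ∧
    (maxCorr p U X Y = 0 ↔
      ∀ (x y : ℝ) (u : 𝒰),
        marg p (fun ω => (X ω, Y ω, U ω)) (x, y, u) * marg p U u =
          marg p (fun ω => (X ω, U ω)) (x, u) * marg p (fun ω => (Y ω, U ω)) (y, u)) ∧
    (maxCorr p U X Y = 1 ↔
      ∃ (𝒱 : FinAlph) (f g : ℝ × 𝒰 → 𝒱),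
        AEEq p (fun ω => f (X ω, U ω)) (fun ω => g (Y ω, U ω)) ∧
        0 < condEnt p (fun ω => f (X ω, U ω)) U) := by
  obtain ⟨hp, -⟩ := hp
  exact ⟨⟨abs_nonneg _, abs_ccorr_le_cratio hp X Y, cratio_le_maxCorr hp X Y,
    maxCorr_le_one hp X Y⟩, maxCorr_eq_zero_iff hp, maxCorr_eq_one_iff hp⟩

end GCI
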